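/- Let k ≥ 3 and r be positive integers with r < k, let p = (p_1,…,p_k) be a tuple of non-negative integers, let a ∈ {2,3,…,k−1} and D ⊆ [a−2]. Define K_{i,j} and 𝔖_{k,a} as follows: K_{i,i} = ∅ if i∈[a−2]∖D, K_{i,i} = [k] if i∈D∪{a−1}, K_{i,j} = ]i,j] for i∈{a−1,…,k−1}, j∈[k], (i,j) ≠ (a−1,a−1); 𝔖_{k,a} is the set of permutations π of [k] with π(i)=i for all i∈[a−2]. For a surjection f:[k−1]→[r], π∈𝔖_{k,a} and j∈[k−1], set H_{f,π,j} = ∪ { K_{i,π(i)} : i∈[k−1]∖{j}, f(i)=f(j) }. Then Σ sgn(π) = 0, where the sum is over all triples (S,f,π) with S∈S_{p,r}, f a surjection from [k−1] onto [r], and π∈𝔖_{k,a}, satisfying K_{i,π(i)} ⊆ S_{f(i)} for every i∈[k−1] and additionally f(a−1) ≠ f(a), a ∉ H_{f,π,a−1}, and a ∈ H_{f,π,a}. -/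

import Mathlib

open Finset

/-- The cyclic interval `]i,j]` of `[k] = {1,…,k}`, realized inside `ZMod k`
(the element `k` of `[k]` is represented by `0 : ZMod k`). -/
def cyc (k : ℕ) [NeZero k] (i j : ZMod k) : Finset (ZMod k) :=
  Finset.univ.filter fun x => 1 ≤ (x - i).val ∧ (x - i).val ≤ (j - i).val

/-- Membership in `𝒮_{p,r}` : each `j ∈ [k]` belongs to exactly `p j` of the sets `S_1,…,S_r`. -/
def SprMem (k r : ℕ) [NeZero k] (p : ZMod k → ℕ) (S : Fin r → Finset (ZMod k)) : Prop :=
  ∀ j : ZMod k, Nat.card {i : Fin r // j ∈ S i} = p j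

/-- Membership in `ℳ_{p,r}` : member of `𝒮_{p,r}` all of whose sets are proper subsets of `[k]`. -/
def MprMem (k r : ℕ) [NeZero k] (p : ZMod k → ℕ) (S : Fin r → Finset (ZMod k)) : Prop :=
  SprMem k r p S ∧ ∀ i, S i ≠ Finset.univ

/-- `|ℳ_{p,r}|`. -/
noncomputable def Mcard (k r : ℕ) [NeZero k] (p : ZMod k → ℕ) : ℕ :=
  Nat.card {S : Fin r → Finset (ZMod k) // MprMem k r p S}

/-- `|𝒮_{p,r}|`. -/
noncomputable def Scard (k r : ℕ) [NeZero k] (p : ZMod k → ℕ) : ℕ :=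
  Nat.card {S : Fin r → Finset (ZMod k) // SprMem k r p S}

/-- `|ℳ_{q,r}|` for an integer-valued tuple `q` (empty if some entry of `q` is negative). -/
noncomputable def McardZ (k r : ℕ) [NeZero k] (q : ZMod k → ℤ) : ℕ :=
  Nat.card {S : Fin r → Finset (ZMod k) //
    (∀ j : ZMod k, (Nat.card {i : Fin r // j ∈ S i} : ℤ) = q j) ∧ ∀ i, S i ≠ Finset.univ}

/-- `alphaRel k S i j` holds iff `j = α(i,S)`. -/
def alphaRel (k : ℕ) [NeZero k] (S : Finset (ZMod k)) (i j : ZMod k) : Prop :=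
  if S = Finset.univ then j = i else j ∉ S ∧ cyc k i (j - 1) ⊆ S

/-- `betaRel k S i j` holds iff `j = β(i,S)`. -/
def betaRel (k : ℕ) [NeZero k] (S : Finset (ZMod k)) (i j : ZMod k) : Prop :=
  if S = Finset.univ then j = i else j + 1 ∉ S ∧ cyc k i j ⊆ S

/-- `gammaRel k S i j` holds iff `j = γ(i,S)`. -/
def gammaRel (k : ℕ) [NeZero k] (S : Finset (ZMod k)) (i j : ZMod k) : Prop :=
  if S = Finset.univ then j = i
  else if i ∈ S then j = i - 1
  else j + 1 ∉ S ∧ cyc k i j ⊆ S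

/-- The digraph on `[k]` with the `k-1` arcs `(i, ζ(i, S_{f i}))` for `i ∈ [k-1]`
(the nonzero elements of `ZMod k`) is a tree, i.e. a spanning tree oriented toward
the root `k` (represented by `0`): following the arcs from any vertex reaches the root. -/
def GIsTree (k r : ℕ) [NeZero k] (zeta : Finset (ZMod k) → ZMod k → ZMod k → Prop)
    (S : Fin r → Finset (ZMod k)) (f : {i : ZMod k // i ≠ 0} → Fin r) : Prop :=
  ∃ g : ZMod k → ZMod k, g 0 = 0 ∧
    (∀ i : {i : ZMod k // i ≠ 0}, zeta (S (f i)) i.1 (g i.1)) ∧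
    ∀ x : ZMod k, ∃ n : ℕ, g^[n] x = 0

/-- Sample space: pairs of a tuple `S ∈ ℳ_{p,r}` and a surjection `f : [k-1] → [r]`,
with the uniform probability measure. -/
abbrev OmM (k r : ℕ) [NeZero k] (p : ZMod k → ℕ) : Type :=
  {om : (Fin r → Finset (ZMod k)) × ({i : ZMod k // i ≠ 0} → Fin r) //
    MprMem k r p om.1 ∧ Function.Surjective om.2}

/-- Sample space `Ω`: pairs of a tuple `S ∈ 𝒮_{p,r}` and a surjection `f : [k-1] → [r]`,
with the uniform probability measure. -/
abbrev OmS (k r : ℕ) [NeZero k] (p : ZMod k → ℕ) : Type :=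
  {om : (Fin r → Finset (ZMod k)) × ({i : ZMod k // i ≠ 0} → Fin r) //
    SprMem k r p om.1 ∧ Function.Surjective om.2}

/-- Uniform probability of an event `A` in a (finite) sample space `Om`. -/
noncomputable def PrU {Om : Type} (A : Set Om) : ℚ :=
  (Nat.card A : ℚ) / (Nat.card Om : ℚ)

/-- The `Pr`-determinant of a `k × k` matrix of events (rows and columns indexed by
`[k]`, i.e. by `ZMod k`). -/
noncomputable def Pdet {k : ℕ} [NeZero k] {Om : Type} (E : ZMod k → ZMod k → Set Om) : ℚ :=
  ∑ pi : Equiv.Perm (ZMod k), ((Equiv.Perm.sign pi : ℤ) : ℚ) * PrU (⋂ i : ZMod k, E i (pi i))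

/-- The matrix of events `M_α`: `M_{α,i,j} = I^{f(i)}_{i,j}` for `i ∈ [k-1]`, and the
row of `i = k` (i.e. `0`) is constant equal to `Ω`. -/
def Malpha (k r : ℕ) [NeZero k] (p : ZMod k → ℕ) (i j : ZMod k) : Set (OmS k r p) :=
  {om : OmS k r p | ∀ hi : i ≠ 0, cyc k i j ⊆ om.1.1 (om.1.2 ⟨i, hi⟩)}

/-- The matrix of events `M_β`: `M_{β,i,j} = J^{f(i)}_{i,j+1}` for `i ∈ [k-1]`, and the
row of `i = k` (i.e. `0`) is constant equal to `Ω`. -/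
def Mbeta (k r : ℕ) [NeZero k] (p : ZMod k → ℕ) (i j : ZMod k) : Set (OmS k r p) :=
  {om : OmS k r p | ∀ hi : i ≠ 0,
    if i = j + 1 then om.1.1 (om.1.2 ⟨i, hi⟩) = Finset.univ
    else cyc k i (j + 1) ⊆ om.1.1 (om.1.2 ⟨i, hi⟩)}

/-- Membership of `om` in the event `J^{f(i)}_{a,b}`. -/
def Jmem (k r : ℕ) [NeZero k] (p : ZMod k → ℕ) (om : OmS k r p)
    (i : {i : ZMod k // i ≠ 0}) (a b : ZMod k) : Prop :=
  if a = b then om.1.1 (om.1.2 i) = Finset.univ else cyc k a b ⊆ om.1.1 (om.1.2 i)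

/-- The sets `K_{i,j}` of Section 5.1 (for given `a ∈ {2,…,k-1}` and `D ⊆ [a-2]`):
`K_{i,i} = ∅` for `i ∈ [a-2] ∖ D`, `K_{i,i} = [k]` for `i ∈ D ∪ {a-1}`, and
`K_{i,j} = ]i,j]` for `i ∈ {a-1,…,k-1}`, `j ∈ [k]`, `(i,j) ≠ (a-1,a-1)`.
(The element `m ∈ [k]` is represented by `(m : ZMod k)`, so `i = a-1` means
`i.val + 1 = a`.) -/
def Kset (k a : ℕ) [NeZero k] (D : Finset (ZMod k)) (i j : ZMod k) : Finset (ZMod k) :=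
  if i = j then (if i.val + 1 = a ∨ i ∈ D then Finset.univ else ∅) else cyc k i j

/-- `H_{f,π,j} = ∪ { K_{i,π(i)} : i ∈ [k-1] ∖ {j}, f(i) = f(j) }`. -/
def Hset (k a r : ℕ) [NeZero k] (D : Finset (ZMod k))
    (f : {i : ZMod k // i ≠ 0} → Fin r) (pi : Equiv.Perm (ZMod k))
    (j : {i : ZMod k // i ≠ 0}) : Finset (ZMod k) :=
  (Finset.univ.filter fun i : {i : ZMod k // i ≠ 0} => i ≠ j ∧ f i = f j).biUnion
    (fun i => Kset k a D i.1 (pi i.1))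

/-!
Sign-reversing involution on `π`. Let `T = S_{f(a)}`. If `T = [k]`, exchanging `π(a)` and `π(k)`
keeps every constraint, since row `a` only asks `K_{a,π(a)} ⊆ T` and row `k` is unconstrained.
Otherwise pick a witness `w ≠ a` with `f(w) = f(a)` and `a ∈ K_{w,π(w)}`; as `T` is proper,
`K_{w,π(w)}` is the cyclic interval `]w,π(w)]`, and exchanging `π(w)` and `π(a)` keeps both rows
inside `T`: `]a,π(w)] ⊆ ]w,π(w)]`, and `]w,π(a)] ⊆ ]w,a] ∪ ]a,π(a)]` unless
`]w,π(w)] ∪ ]a,π(a)]` is already all of `[k]`. The exchange flips the sign of `π` and does not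
change the set of witnesses, hence not the chosen one, so it is a fixed-point-free involution.
-/

open Finset Equiv

theorem sum_sign_eq_zero_of_involution {ι α : Type*} [DecidableEq α] [Fintype α]
    {s : Finset ι} (σ : ι → Perm α) (φ : ι → ι) (hmem : ∀ x ∈ s, φ x ∈ s)
    (hinv : ∀ x ∈ s, φ (φ x) = x) (hsign : ∀ x ∈ s, Perm.sign (σ (φ x)) = -Perm.sign (σ x)) :
    ∑ x ∈ s, (Perm.sign (σ x) : ℤ) = 0 :=
  sum_involution (fun x _ => φ x)
    (fun x hx => by rw [hsign x hx, Units.val_neg, add_neg_cancel])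
    (fun x hx _ hfix => units_ne_neg_self _ (by rw [← hsign x hx, hfix]))
    hmem hinv

section CyclicInterval

variable {k : ℕ} [NeZero k]

theorem mem_cyc {i j x : ZMod k} :
    x ∈ cyc k i j ↔ 1 ≤ (x - i).val ∧ (x - i).val ≤ (j - i).val := by
  simp [cyc]

@[simp]
theorem cyc_self (i : ZMod k) : cyc k i i = ∅ := by
  ext x
  simp only [mem_cyc, sub_self, ZMod.val_zero, Finset.notMem_empty, iff_false]
  omega

theorem val_sub_add_val_sub (x c i : ZMod k) :
    (x - c).val + (c - i).val = (x - i).val ∨ (x - c).val + (c - i).val = (x - i).val + k := by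
  have hsum := ZMod.val_add (x - c) (c - i)
  rw [sub_add_sub_cancel] at hsum
  have hxc := ZMod.val_lt (x - c)
  have hci := ZMod.val_lt (c - i)
  rcases lt_or_ge ((x - c).val + (c - i).val) k with h | h
  · rw [Nat.mod_eq_of_lt h] at hsum
    omega
  · rw [Nat.mod_eq_sub_mod h, Nat.mod_eq_of_lt (by omega)] at hsum
    omega

theorem cyc_union_cyc {i j c : ZMod k} (hc : c ∈ cyc k i j) :
    cyc k i c ∪ cyc k c j = cyc k i j := by
  ext x
  rw [mem_cyc] at hc
  simp only [mem_union, mem_cyc]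
  have := val_sub_add_val_sub x c i
  have := val_sub_add_val_sub j c i
  have := ZMod.val_lt (x - i)
  have := ZMod.val_lt (x - c)
  have := ZMod.val_lt (j - i)
  have := ZMod.val_lt (j - c)
  omega

theorem cyc_union_cyc_eq_univ {i j j' c : ZMod k} (h₁ : c ∈ cyc k i j') (h₂ : c ∉ cyc k i j) :
    cyc k i j' ∪ cyc k c j = univ := by
  ext x
  rw [mem_cyc] at h₁ h₂
  simp only [mem_union, mem_cyc, mem_univ, iff_true]
  have := val_sub_add_val_sub x c i
  have := val_sub_add_val_sub j c i
  have := ZMod.val_lt (x - i)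
  have := ZMod.val_lt (x - c)
  have := ZMod.val_lt (c - i)
  omega

theorem cyc_exchange {T : Finset (ZMod k)} (hT : T ≠ univ) {w b u v : ZMod k}
    (hb : b ∈ cyc k w u) (hu : cyc k w u ⊆ T) (hv : cyc k b v ⊆ T) :
    b ∈ cyc k w v ∧ cyc k w v ⊆ T ∧ cyc k b u ⊆ T := by
  have hwb : cyc k w b ⊆ T := (cyc_union_cyc hb ▸ subset_union_left).trans hu
  have hbu : cyc k b u ⊆ T := (cyc_union_cyc hb ▸ subset_union_right).trans hu
  by_cases hbv : b ∈ cyc k w v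
  · exact ⟨hbv, cyc_union_cyc hbv ▸ union_subset hwb hv, hbu⟩
  · exact absurd (univ_subset_iff.mp (cyc_union_cyc_eq_univ hb hbv ▸ union_subset hu hv)) hT

end CyclicInterval

section Kset

variable {k : ℕ} [NeZero k] {a : ℕ} {D : Finset (ZMod k)}

theorem Kset_of_ne {i j : ZMod k} (h : i ≠ j) : Kset k a D i j = cyc k i j :=
  if_neg h

theorem Kset_eq_cyc {i : ZMod k} (hi : ¬(i.val + 1 = a ∨ i ∈ D)) (j : ZMod k) :
    Kset k a D i j = cyc k i j := by
  by_cases hij : i = j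
  · subst hij
    simp [Kset, hi]
  · exact Kset_of_ne hij

theorem Kset_eq_cyc_of_mem_of_ne_univ {i j x : ZMod k} (hx : x ∈ Kset k a D i j)
    (hU : Kset k a D i j ≠ univ) : Kset k a D i j = cyc k i j := by
  by_cases hij : i = j
  · unfold Kset at hx hU
    split_ifs at hx hU <;> simp_all
  · exact Kset_of_ne hij

end Kset

section Hset

variable {k a r : ℕ} [NeZero k] {D : Finset (ZMod k)} {f : {i : ZMod k // i ≠ 0} → Fin r}

def hsetWitnesses (k a r : ℕ) [NeZero k] (D : Finset (ZMod k))
    (f : {i : ZMod k // i ≠ 0} → Fin r) (π : Perm (ZMod k)) (j : {i : ZMod k // i ≠ 0})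
    (x : ZMod k) : Finset {i : ZMod k // i ≠ 0} :=
  univ.filter fun i => i ≠ j ∧ f i = f j ∧ x ∈ Kset k a D i.1 (π i.1)

theorem mem_Hset_iff_nonempty {π : Perm (ZMod k)} {j : {i : ZMod k // i ≠ 0}} {x : ZMod k} :
    x ∈ Hset k a r D f π j ↔ (hsetWitnesses k a r D f π j x).Nonempty := by
  simp [Hset, hsetWitnesses, Finset.Nonempty, and_assoc]

theorem Hset_congr {π π' : Perm (ZMod k)} {j : {i : ZMod k // i ≠ 0}}
    (h : ∀ i : {i : ZMod k // i ≠ 0}, i ≠ j → f i = f j → π i.1 = π' i.1) :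
    Hset k a r D f π j = Hset k a r D f π' j := by
  refine biUnion_congr rfl fun i hi => ?_
  rw [mem_filter] at hi
  rw [h i hi.2.1 hi.2.2]

end Hset

def YAdmissible (k r a : ℕ) [NeZero k] (D : Finset (ZMod k)) (am aa : {i : ZMod k // i ≠ 0})
    (S : Fin r → Finset (ZMod k)) (f : {i : ZMod k // i ≠ 0} → Fin r) (π : Perm (ZMod k)) :
    Prop :=
  (∀ i : ZMod k, 1 ≤ i.val → i.val ≤ a - 2 → π i = i) ∧
    (∀ i : {i : ZMod k // i ≠ 0}, Kset k a D i.1 (π i.1) ⊆ S (f i)) ∧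
    f am ≠ f aa ∧ (a : ZMod k) ∉ Hset k a r D f π am ∧ (a : ZMod k) ∈ Hset k a r D f π aa

noncomputable def yPivot (k r a : ℕ) [NeZero k] (D : Finset (ZMod k))
    (aa : {i : ZMod k // i ≠ 0}) (S : Fin r → Finset (ZMod k))
    (f : {i : ZMod k // i ≠ 0} → Fin r) (π : Perm (ZMod k)) : ZMod k :=
  if S (f aa) = univ then 0
  else if h : (hsetWitnesses k a r D f π aa a).Nonempty then h.choose.1 else 0

section Involution

variable {k r a : ℕ} [NeZero k] {D : Finset (ZMod k)} {am aa : {i : ZMod k // i ≠ 0}}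
  {S : Fin r → Finset (ZMod k)} {f : {i : ZMod k // i ≠ 0} → Fin r} {π : Perm (ZMod k)}

theorem yPivot_ne (haa : aa.1 = a) : yPivot k r a D aa S f π ≠ a := by
  unfold yPivot
  split_ifs with hT hW
  · exact haa ▸ aa.2.symm
  · exact fun h => (mem_filter.mp hW.choose_spec).2.1 (Subtype.ext (h.trans haa.symm))
  · exact haa ▸ aa.2.symm

theorem yPivot_congr {π' : Perm (ZMod k)}
    (h : hsetWitnesses k a r D f π' aa a = hsetWitnesses k a r D f π aa a) :
    yPivot k r a D aa S f π' = yPivot k r a D aa S f π := by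
  unfold yPivot
  rw [h]

theorem YAdmissible.mul_swap (hx : YAdmissible k r a D am aa S f π) (haa : aa.1 = a)
    (hAval : (a : ZMod k).val = a) {c : ZMod k}
    (hcfix : ¬(1 ≤ c.val ∧ c.val ≤ a - 2)) (hrow : Kset k a D a (π c) ⊆ S (f aa))
    (hc : ∀ i : {i : ZMod k // i ≠ 0}, i.1 = c → i ∈ hsetWitnesses k a r D f π aa a ∧
      (a : ZMod k) ∈ Kset k a D c (π a) ∧ Kset k a D c (π a) ⊆ S (f aa)) :
    YAdmissible k r a D am aa S f (π * swap c a) ∧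
      hsetWitnesses k a r D f (π * swap c a) aa a = hsetWitnesses k a r D f π aa a := by
  obtain ⟨hfix, hrows, hfne, hHam, hHaa⟩ := hx
  have hσ : ∀ i : {i : ZMod k // i ≠ 0}, i ≠ aa → i.1 ≠ c → (π * swap c a) i.1 = π i.1 :=
    fun i hiaa hic => by
      rw [Perm.mul_apply, swap_apply_of_ne_of_ne hic (haa ▸ fun h => hiaa (Subtype.ext h))]
  have hσc : (π * swap c a) c = π a := by rw [Perm.mul_apply, swap_apply_left]
  have hσa : (π * swap c a) aa.1 = π c := by rw [haa, Perm.mul_apply, swap_apply_right]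
  have hW : hsetWitnesses k a r D f (π * swap c a) aa a = hsetWitnesses k a r D f π aa a := by
    refine filter_congr fun i _ => and_congr_right fun hiaa => and_congr_right fun _ => ?_
    by_cases hic : i.1 = c
    · obtain ⟨hiW, hcK, -⟩ := hc i hic
      rw [hic, hσc]
      exact iff_of_true hcK (hic ▸ (mem_filter.mp hiW).2.2.2)
    · rw [hσ i hiaa hic]
  refine ⟨⟨fun y h1 h2 => ?_, fun i => ?_, hfne, ?_, ?_⟩, hW⟩
  · have hya : y ≠ a := fun h => by rw [h, hAval] at h1 h2; omega
    have hyc : y ≠ c := fun h => hcfix (h ▸ ⟨h1, h2⟩)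
    rw [Perm.mul_apply, swap_apply_of_ne_of_ne hyc hya, hfix y h1 h2]
  · by_cases hiaa : i = aa
    · subst hiaa
      rwa [hσa, haa]
    by_cases hic : i.1 = c
    · have hif := (mem_filter.mp (hc i hic).1).2.2.1
      rw [hic, hσc, hif]
      exact (hc i hic).2.2
    · rw [hσ i hiaa hic]
      exact hrows i
  · rwa [Hset_congr fun i _ hif => hσ i ?_ ?_]
    · exact fun h => hfne (h ▸ hif).symm
    · exact fun h => hfne (hif ▸ (mem_filter.mp (hc i h).1).2.2.1)
  · rwa [mem_Hset_iff_nonempty, hW, ← mem_Hset_iff_nonempty]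

theorem YAdmissible.mul_swap_yPivot (hx : YAdmissible k r a D am aa S f π)
    (hak : a ≤ k - 1) (hD : ∀ i ∈ D, 1 ≤ i.val ∧ i.val ≤ a - 2) (haa : aa.1 = a) :
    YAdmissible k r a D am aa S f (π * swap (yPivot k r a D aa S f π) a) ∧
      hsetWitnesses k a r D f (π * swap (yPivot k r a D aa S f π) a) aa a =
        hsetWitnesses k a r D f π aa a := by
  have hAval : (a : ZMod k).val = a := ZMod.val_natCast_of_lt (by have := NeZero.ne k; omega)
  by_cases hT : S (f aa) = univ
  · rw [yPivot, if_pos hT]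
    exact hx.mul_swap haa hAval (by simp) (hT ▸ subset_univ _) fun i hi => absurd hi i.2
  have hWne := mem_Hset_iff_nonempty.mp hx.2.2.2.2
  set w := hWne.choose
  obtain ⟨-, hwf, hwK⟩ := (mem_filter.mp hWne.choose_spec).2
  have hwrow : Kset k a D w.1 (π w.1) ⊆ S (f aa) := hwf ▸ hx.2.1 w
  have hKw := Kset_eq_cyc_of_mem_of_ne_univ hwK fun h => hT (univ_subset_iff.mp (h ▸ hwrow))
  have hKa : ∀ j, Kset k a D a j = cyc k a j := Kset_eq_cyc fun h =>
    h.elim (by omega) fun hA => by have := hD _ hA; omega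
  have hwcyc : (a : ZMod k) ∈ cyc k w.1 (π w.1) := hKw ▸ hwK
  obtain ⟨hwv, hwvT, hauT⟩ := cyc_exchange hT hwcyc (hKw ▸ hwrow) (hKa _ ▸ haa ▸ hx.2.1 aa)
  have hπw : π w.1 ≠ w.1 := fun h => by rw [h, cyc_self] at hwcyc; simp at hwcyc
  have hwπa : w.1 ≠ π a := fun h => by rw [← h, cyc_self] at hwv; simp at hwv
  rw [yPivot, if_neg hT, dif_pos hWne]
  refine hx.mul_swap haa hAval (fun h => hπw (hx.1 _ h.1 h.2)) (hKa _ ▸ hauT) fun i hi => ?_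
  obtain rfl : i = w := Subtype.ext hi
  exact ⟨hWne.choose_spec, Kset_of_ne hwπa ▸ hwv, Kset_of_ne hwπa ▸ hwvT⟩

end Involution

open scoped Classical in
theorem signed_sum_Y_general (k r : ℕ) [NeZero k]
    (p : ZMod k → ℕ) (a : ℕ) (hak : a ≤ k - 1)
    (D : Finset (ZMod k)) (hD : ∀ i ∈ D, 1 ≤ i.val ∧ i.val ≤ a - 2)
    (am aa : {i : ZMod k // i ≠ 0})
    (haa : aa.1 = (a : ZMod k)) :
    ∑ x ∈ Finset.univ.filter (fun x : (Fin r → Finset (ZMod k)) ×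
          ({i : ZMod k // i ≠ 0} → Fin r) × Equiv.Perm (ZMod k) =>
        SprMem k r p x.1 ∧ Function.Surjective x.2.1 ∧
        (∀ i : ZMod k, 1 ≤ i.val → i.val ≤ a - 2 → x.2.2 i = i) ∧
        (∀ i : {i : ZMod k // i ≠ 0}, Kset k a D i.1 (x.2.2 i.1) ⊆ x.1 (x.2.1 i)) ∧
        x.2.1 am ≠ x.2.1 aa ∧
        (a : ZMod k) ∉ Hset k a r D x.2.1 x.2.2 am ∧
        (a : ZMod k) ∈ Hset k a r D x.2.1 x.2.2 aa),
      (Equiv.Perm.sign x.2.2 : ℤ) = 0 := by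
  refine sum_sign_eq_zero_of_involution (fun x => x.2.2)
    (fun x => (x.1, x.2.1, x.2.2 * swap (yPivot k r a D aa x.1 x.2.1 x.2.2) a)) ?_ ?_ ?_
  · rintro ⟨S, f, π⟩ hx
    simp only [mem_filter, mem_univ, true_and] at hx ⊢
    exact ⟨hx.1, hx.2.1, (YAdmissible.mul_swap_yPivot hx.2.2 hak hD haa).1⟩
  · rintro ⟨S, f, π⟩ hx
    simp only [mem_filter, mem_univ, true_and] at hx
    rw [yPivot_congr (YAdmissible.mul_swap_yPivot hx.2.2 hak hD haa).2, mul_assoc,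
      swap_mul_self, mul_one]
  · intro x _
    rw [Perm.sign_mul, Perm.sign_swap (yPivot_ne haa), mul_neg_one]

open scoped Classical in
/-- Lemma 11 (`Y = 0`): the signed count of triples `(S,f,π)` in `Ω(N^{a,D})` with
`f(a-1) ≠ f(a)`, `a ∉ H_{f,π,a-1}` and `a ∈ H_{f,π,a}` is zero. Here `am` and `aa`
denote the elements `a-1` and `a` of `[k-1]`. -/
theorem signed_sum_Y (k r : ℕ) [NeZero k] (hk : 3 ≤ k) (hr : 0 < r) (hrk : r < k)
    (p : ZMod k → ℕ) (a : ℕ) (ha : 2 ≤ a) (hak : a ≤ k - 1)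
    (D : Finset (ZMod k)) (hD : ∀ i ∈ D, 1 ≤ i.val ∧ i.val ≤ a - 2)
    (am aa : {i : ZMod k // i ≠ 0}) (ham : am.1 = (a : ZMod k) - 1)
    (haa : aa.1 = (a : ZMod k)) :
    ∑ x ∈ Finset.univ.filter (fun x : (Fin r → Finset (ZMod k)) ×
          ({i : ZMod k // i ≠ 0} → Fin r) × Equiv.Perm (ZMod k) =>
        SprMem k r p x.1 ∧ Function.Surjective x.2.1 ∧
        (∀ i : ZMod k, 1 ≤ i.val → i.val ≤ a - 2 → x.2.2 i = i) ∧
        (∀ i : {i : ZMod k // i ≠ 0}, Kset k a D i.1 (x.2.2 i.1) ⊆ x.1 (x.2.1 i)) ∧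
        x.2.1 am ≠ x.2.1 aa ∧
        (a : ZMod k) ∉ Hset k a r D x.2.1 x.2.2 am ∧
        (a : ZMod k) ∈ Hset k a r D x.2.1 x.2.2 aa),
      (Equiv.Perm.sign x.2.2 : ℤ) = 0 :=
  signed_sum_Y_general k r p a hak D hD am aa haa
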